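/- arXiv:2312.13825 — 2 statements merged into one kernel-verified Lean document; each statement's English description precedes it below -/
import Mathlib

section
/- Let Z and Z' be cyclic orders on sets S and S', each with at least two elements, and let T (on R) and T' (on R') be cycle completions of Z and Z' respectively. Let F : R → R' be a surjective monotone map with F(S) ⊆ S'. Then (1) for every v' ∈ R' \ S' there is exactly one v ∈ R with F(v) = v', and this v lies in R \ S; and (2) for every s' ∈ S' there is some s ∈ S with F(s) = s', i.e. F(S) = S'. -/
def IsCyclicOrder {S : Type*} (Z : Set (S × S × S)) : Prop :=
  (∀ a b c : S, (a, b, c) ∈ Z → (b, c, a) ∈ Z) ∧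
  (∀ a b c : S, (a, b, c) ∈ Z → (c, b, a) ∉ Z) ∧
  (∀ a b c : S, a ≠ b → b ≠ c → a ≠ c → (a, b, c) ∉ Z → (c, b, a) ∈ Z) ∧
  (∀ a b c d : S, (a, b, c) ∈ Z → (a, c, d) ∈ Z → (a, b, d) ∈ Z)

/-- The closed interval `[s,t]` of a cyclic order. -/
def cycInterval {S : Type*} (Z : Set (S × S × S)) (s t : S) : Set S :=
  {s, t} ∪ {c | (s, c, t) ∈ Z}

/-- The open interval `]s,t[` of a cyclic order. -/
def cycOpen {S : Type*} (Z : Set (S × S × S)) (s t : S) : Set S :=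
  {c | (s, c, t) ∈ Z}

/-- A subset `I` is an interval of the cyclic order `Z`. -/
def IsInterval {S : Type*} (Z : Set (S × S × S)) (I : Set S) : Prop :=
  ∀ s ∈ I, ∀ t ∈ I, cycInterval Z s t ⊆ I ∨ cycInterval Z t s ⊆ I

/-- The cyclic order induced on a subset `A`. -/
def inducedCycOrder {S : Type*} (Z : Set (S × S × S)) (A : Set S) : Set (S × S × S) :=
  {p | p ∈ Z ∧ p.1 ∈ A ∧ p.2.1 ∈ A ∧ p.2.2 ∈ A}

/-- `T` (a cyclic order on the whole type `R`) is a cycle completion of the cyclic order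
it induces on the subset `S`: every non-trivial interval of the induced order on `S` is
uniquely of the form `[v,w]_T ∩ S` with `v, w ∉ S`. -/
def IsCycleCompletion {R : Type*} (T : Set (R × R × R)) (S : Set R) : Prop :=
  IsCyclicOrder T ∧
  ∀ I : Set R, I ⊆ S → IsInterval (inducedCycOrder T S) I → I.Nonempty → I ≠ S →
    ∃! vw : R × R, vw.1 ∉ S ∧ vw.2 ∉ S ∧ cycInterval T vw.1 vw.2 ∩ S = I

/-- A map between cyclically ordered sets is monotone. -/
def CycMonotone {S S' : Type*} (Z : Set (S × S × S)) (Z' : Set (S' × S' × S'))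
    (f : S → S') : Prop :=
  ∀ a b c : S, (f a, f b, f c) ∈ Z' → (a, b, c) ∈ Z

namespace CycAux

variable {R : Type*} {T : Set (R × R × R)}

lemma rot (hT : IsCyclicOrder T) {a b c : R} (h : (a, b, c) ∈ T) : (b, c, a) ∈ T := hT.1 a b c h

lemma rot2 (hT : IsCyclicOrder T) {a b c : R} (h : (a, b, c) ∈ T) : (c, a, b) ∈ T :=
  rot hT (rot hT h)

lemma asym (hT : IsCyclicOrder T) {a b c : R} (h : (a, b, c) ∈ T) : (c, b, a) ∉ T :=
  hT.2.1 a b c h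

lemma trans4 (hT : IsCyclicOrder T) {a b c d : R} (h1 : (a, b, c) ∈ T) (h2 : (a, c, d) ∈ T) :
    (a, b, d) ∈ T := hT.2.2.2 a b c d h1 h2

lemma total' (hT : IsCyclicOrder T) {a b c : R} (hab : a ≠ b) (hbc : b ≠ c) (hac : a ≠ c) :
    (a, b, c) ∈ T ∨ (c, b, a) ∈ T := by
  by_cases h : (a, b, c) ∈ T
  · exact Or.inl h
  · exact Or.inr (hT.2.2.1 a b c hab hbc hac h)

lemma chain (hT : IsCyclicOrder T) {a b c d : R} (h1 : (a, b, c) ∈ T) (h2 : (a, c, d) ∈ T) :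
    (b, c, d) ∈ T := rot2 hT (trans4 hT (rot hT h2) (rot2 hT h1))

lemma not_abb (hT : IsCyclicOrder T) {a b : R} : (a, b, b) ∉ T := fun h => asym hT h (rot hT h)

lemma not_aab (hT : IsCyclicOrder T) {a b : R} : (a, a, b) ∉ T := fun h => not_abb hT (rot2 hT h)

lemma not_aba (hT : IsCyclicOrder T) {a b : R} : (a, b, a) ∉ T := fun h => not_abb hT (rot hT h)

lemma ne12 (hT : IsCyclicOrder T) {a b c : R} (h : (a, b, c) ∈ T) : a ≠ b := by
  rintro rfl; exact not_aab hT h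

lemma ne23 (hT : IsCyclicOrder T) {a b c : R} (h : (a, b, c) ∈ T) : b ≠ c := by
  rintro rfl; exact not_abb hT h

lemma ne13 (hT : IsCyclicOrder T) {a b c : R} (h : (a, b, c) ∈ T) : a ≠ c := by
  rintro rfl; exact not_aba hT h

lemma mem_cycI {Z : Set (R × R × R)} {x y z : R} :
    z ∈ cycInterval Z x y ↔ z = x ∨ z = y ∨ (x, z, y) ∈ Z := by
  simp only [cycInterval, Set.mem_union, Set.mem_insert_iff, Set.mem_singleton_iff,
    Set.mem_setOf_eq, or_assoc]

lemma between_sub (hT : IsCyclicOrder T) {x y s t : R}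
    (hs : s ∈ cycInterval T x y) (ht : t ∈ cycInterval T x y) (hst : s ≠ t) :
    (∀ z, (s, z, t) ∈ T → z ∈ cycInterval T x y) ∨
      (∀ z, (t, z, s) ∈ T → z ∈ cycInterval T x y) := by
  have mem : ∀ z : R, (x, z, y) ∈ T → z ∈ cycInterval T x y := fun z h =>
    mem_cycI.mpr (Or.inr (Or.inr h))
  rw [mem_cycI] at hs ht
  rcases hs with rfl | rfl | hs <;> rcases ht with rfl | rfl | ht
  · exact absurd rfl hst
  · exact Or.inl fun z h => mem z h
  · exact Or.inl fun z h => mem z (trans4 hT h ht)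
  · exact Or.inr fun z h => mem z h
  · exact absurd rfl hst
  · exact Or.inr fun z h => mem z (rot2 hT (chain hT h (rot hT ht)))
  · exact Or.inr fun z h => mem z (trans4 hT h hs)
  · exact Or.inl fun z h => mem z (rot2 hT (chain hT h (rot hT hs)))
  · rcases total' hT (ne12 hT hs) hst (ne12 hT ht) with hc | hc
    · exact Or.inl fun z h => mem z (trans4 hT (rot2 hT (chain hT h (rot hT hc))) ht)
    · exact Or.inr fun z h => mem z (trans4 hT (rot2 hT (chain hT h hc)) hs)

lemma trace_interval (hT : IsCyclicOrder T) (S : Set R) (x y : R) :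
    IsInterval (inducedCycOrder T S) (S ∩ cycInterval T x y) := by
  intro s hs t ht
  by_cases hst : s = t
  · subst hst
    left
    intro z hz
    rcases mem_cycI.mp hz with rfl | rfl | h
    · exact hs
    · exact hs
    · exact absurd h.1 (not_aba hT)
  · rcases between_sub hT hs.2 ht.2 hst with k | k
    · left
      intro z hz
      rcases mem_cycI.mp hz with rfl | rfl | h
      · exact hs
      · exact ht
      · exact ⟨h.2.2.1, k z h.1⟩
    · right
      intro z hz
      rcases mem_cycI.mp hz with rfl | rfl | h
      · exact ht
      · exact hs
      · exact ⟨h.2.2.1, k z h.1⟩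

lemma singleton_interval (hT : IsCyclicOrder T) (S : Set R) (a : R) :
    IsInterval (inducedCycOrder T S) {a} := by
  rintro s rfl t rfl
  left
  intro z hz
  rcases mem_cycI.mp hz with rfl | rfl | h
  · rfl
  · rfl
  · exact absurd h.1 (not_aba hT)


lemma L1core {S : Set R} (hT : IsCyclicOrder T)
    (hcomp : ∀ I : Set R, I ⊆ S → IsInterval (inducedCycOrder T S) I → I.Nonempty → I ≠ S →
      ∃! vw : R × R, vw.1 ∉ S ∧ vw.2 ∉ S ∧ cycInterval T vw.1 vw.2 ∩ S = I)
    {a b v w : R} (ha : a ∈ S) (hb : b ∈ S) (hab : a ≠ b)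
    (hv : v ∉ S) (hw : w ∉ S) (hvw : v ≠ w)
    (hE : ∀ s ∈ S, s ∉ cycInterval T v w)
    (hwab : (w, a, b) ∈ T) : False := by
  have hSside : ∀ s ∈ S, (w, s, v) ∈ T := by
    intro s hs
    have h1 : v ≠ s := fun e => hv (e ▸ hs)
    have h2 : s ≠ w := fun e => hw (e ▸ hs)
    rcases total' hT h1 h2 hvw with h | h
    · exact absurd (mem_cycI.mpr (Or.inr (Or.inr h))) (hE s hs)
    · exact h
  set I₀ := S ∩ cycInterval T w a with hI₀
  have haI : a ∈ I₀ := ⟨ha, mem_cycI.mpr (Or.inr (Or.inl rfl))⟩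
  have hbI : b ∉ I₀ := by
    rintro ⟨-, h⟩
    rcases mem_cycI.mp h with rfl | rfl | h
    · exact hw hb
    · exact hab rfl
    · exact asym hT hwab (rot hT h)
  obtain ⟨⟨p, q⟩, ⟨hp, hq, htr⟩, -⟩ :=
    hcomp I₀ Set.inter_subset_left (trace_interval hT S w a) ⟨a, haI⟩
      (fun hEq => hbI (hEq.symm ▸ hb))
  have haPQ : a ∈ cycInterval T p q := by
    have : a ∈ cycInterval T p q ∩ S := htr.symm ▸ haI
    exact this.1
  have hpaq : (p, a, q) ∈ T := by
    rcases mem_cycI.mp haPQ with rfl | rfl | h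
    · exact absurd ha hp
    · exact absurd ha hq
    · exact h
  have hbpq : b ∉ cycInterval T p q := fun h => hbI (htr ▸ (⟨h, hb⟩ : b ∈ cycInterval T p q ∩ S))
  have hqbp : (q, b, p) ∈ T := by
    have h1 : p ≠ b := fun e => hp (e ▸ hb)
    have h2 : b ≠ q := fun e => hq (e.symm ▸ hb)
    have h3 : p ≠ q := ne13 hT hpaq
    rcases total' hT h1 h2 h3 with h | h
    · exact absurd (mem_cycI.mpr (Or.inr (Or.inr h))) hbpq
    · exact h
  have haqb : (a, q, b) ∈ T := by
    have h1 : a ≠ q := ne23 hT hpaq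
    have h2 : q ≠ b := ne12 hT hqbp
    rcases total' hT h1 h2 hab with h | h
    · exact h
    · exact absurd (rot2 hT h) (asym hT (trans4 hT hqbp (rot2 hT hpaq)))
  have hwaq : (w, a, q) ∈ T := rot2 hT (trans4 hT haqb (rot hT hwab))
  have hwav : (w, a, v) ∈ T := hSside a ha
  have hwbv : (w, b, v) ∈ T := hSside b hb
  have habv : (a, b, v) ∈ T := chain hT hwab hwbv
  have haqv : (a, q, v) ∈ T := trans4 hT haqb habv
  have hwqv : (w, q, v) ∈ T := rot2 hT (chain hT haqv (rot hT hwav))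
  have hqbv : (q, b, v) ∈ T := chain hT haqb habv
  set J := S ∩ cycInterval T w q with hJ
  have haJ : a ∈ J := ⟨ha, mem_cycI.mpr (Or.inr (Or.inr hwaq))⟩
  have hbJ : b ∉ J := by
    rintro ⟨-, h⟩
    rcases mem_cycI.mp h with rfl | rfl | h
    · exact hw hb
    · exact (ne12 hT hqbv) rfl
    · exact asym hT (rot2 hT hqbv) (chain hT h hwqv)
  have hJtr : cycInterval T w q ∩ S = J := Set.inter_comm _ _
  have hJeq : cycInterval T v q ∩ S = J := by
    ext z
    constructor
    · rintro ⟨hzc, hzS⟩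
      refine ⟨hzS, ?_⟩
      rcases mem_cycI.mp hzc with rfl | rfl | h
      · exact absurd hzS hv
      · exact absurd hzS hq
      · have hzw : z ≠ w := fun e => hw (e ▸ hzS)
        have hwz : w ≠ z := hzw.symm
        rcases total' hT hwz (ne23 hT h) (ne12 hT hwqv) with h2 | h2
        · exact mem_cycI.mpr (Or.inr (Or.inr h2))
        · have h3 : (q, v, z) ∈ T := by
            rcases total' hT (ne23 hT hwqv) (ne12 hT h) (ne23 hT h).symm with h4 | h4
            · exact h4
            · exact absurd (rot2 hT h4) (asym hT h)
          have h5 : (v, z, w) ∈ T := chain hT h3 h2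
          exact absurd (mem_cycI.mpr (Or.inr (Or.inr h5))) (hE z hzS)
    · rintro ⟨hzS, hzc⟩
      refine ⟨?_, hzS⟩
      rcases mem_cycI.mp hzc with rfl | rfl | h
      · exact absurd hzS hw
      · exact absurd hzS hq
      · exact mem_cycI.mpr (Or.inr (Or.inr (rot2 hT (chain hT h hwqv))))
  obtain ⟨vw₀, -, huniq⟩ := hcomp J Set.inter_subset_left (trace_interval hT S w q) ⟨a, haJ⟩
    (fun hEq => hbJ (hEq.symm ▸ hb))
  have e1 := huniq (w, q) ⟨hw, hq, hJtr⟩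
  have e2 := huniq (v, q) ⟨hv, hq, hJeq⟩
  exact hvw (congrArg Prod.fst (e2.trans e1.symm))


lemma L1 {S : Set R} (hT : IsCyclicOrder T)
    (hcomp : ∀ I : Set R, I ⊆ S → IsInterval (inducedCycOrder T S) I → I.Nonempty → I ≠ S →
      ∃! vw : R × R, vw.1 ∉ S ∧ vw.2 ∉ S ∧ cycInterval T vw.1 vw.2 ∩ S = I)
    {a b v w : R} (ha : a ∈ S) (hb : b ∈ S) (hab : a ≠ b)
    (hv : v ∉ S) (hw : w ∉ S) (hvw : v ≠ w) :
    ∃ s ∈ S, s ∈ cycInterval T v w := by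
  by_contra hcon
  push_neg at hcon
  have hwa : w ≠ a := fun e => hw (e ▸ ha)
  have hwb : w ≠ b := fun e => hw (e ▸ hb)
  rcases total' hT hwa hab hwb with hc | hc
  · exact L1core hT hcomp ha hb hab hv hw hvw hcon hc
  · exact L1core hT hcomp hb ha hab.symm hv hw hvw hcon (rot2 hT hc)

end CycAux

namespace CycAux

variable {R R' : Type*} {T : Set (R × R × R)} {T' : Set (R' × R' × R')}
  {S : Set R} {S' : Set R'} {F : R → R'}

lemma Ucore (hcc : IsCycleCompletion T S)
    (hS : ∃ a ∈ S, ∃ b ∈ S, a ≠ b)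
    (hFS : F '' S ⊆ S')
    {v w : R} {v' : R'} (hv' : v' ∉ S') (hFv : F v = v') (hFw : F w = v') (hvw : v ≠ w)
    (hall : ∀ z, (v, z, w) ∈ T → F z = v') : False := by
  obtain ⟨a, ha, b, hb, hab⟩ := hS
  have hvS : v ∉ S := fun h => hv' (hFv ▸ hFS ⟨v, h, rfl⟩)
  have hwS : w ∉ S := fun h => hv' (hFw ▸ hFS ⟨w, h, rfl⟩)
  obtain ⟨s, hsS, hsI⟩ := L1 hcc.1 hcc.2 ha hb hab hvS hwS hvw
  rcases mem_cycI.mp hsI with rfl | rfl | h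
  · exact hvS hsS
  · exact hwS hsS
  · exact hv' ((hall s h) ▸ hFS ⟨s, hsS, rfl⟩)

lemma dichotomy (hT : IsCyclicOrder T) (hT' : IsCyclicOrder T')
    (hS' : ∃ a ∈ S', ∃ b ∈ S', a ≠ b)
    (hsurj : Function.Surjective F) (hmono : CycMonotone T T' F)
    {v w : R} {v' : R'} (hv' : v' ∉ S') (hFv : F v = v') (hFw : F w = v') (hvw : v ≠ w) :
    (∀ z, (v, z, w) ∈ T → F z = v') ∨ (∀ z, (w, z, v) ∈ T → F z = v') := by
  by_contra hcon
  push_neg at hcon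
  obtain ⟨⟨z₀, hz₀, hz₀ne⟩, ⟨z₀', hz₀', hz₀'ne⟩⟩ := hcon
  have C1 : ∀ z z', (v, z, w) ∈ T → (w, z', v) ∈ T → F z ≠ v' → F z' ≠ v' → F z = F z' := by
    intro z z' h1 h2 hne hne'
    by_contra hzz'
    rcases total' hT' (Ne.symm hne) hzz' (Ne.symm hne') with hc | hc
    · have hA : (w, z, z') ∈ T := hmono _ _ _ (by rw [hFw]; exact hc)
      exact asym hT (trans4 hT h2 (rot2 hT h1)) (rot hT hA)
    · have hA : (z', z, v) ∈ T := hmono _ _ _ (by rw [hFv]; exact hc)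
      exact asym hT (chain hT h2 (rot2 hT h1)) (rot hT hA)
  have himg : ∀ x, F x = v' ∨ F x = F z₀ := by
    intro x
    by_cases hx : F x = v'
    · exact Or.inl hx
    · right
      by_cases hxv : x = v
      · exact absurd (hxv ▸ hFv) hx
      by_cases hxw : x = w
      · exact absurd (hxw ▸ hFw) hx
      rcases total' hT (Ne.symm hxv) hxw hvw with hcase | hcase
      · rw [C1 x z₀' hcase hz₀' hx hz₀'ne, ← C1 z₀ z₀' hz₀ hz₀' hz₀ne hz₀'ne]
      · exact (C1 z₀ x hz₀ hcase hz₀ne hx).symm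
  obtain ⟨a', ha', b', hb', hab'⟩ := hS'
  obtain ⟨xa, hxa⟩ := hsurj a'
  obtain ⟨xb, hxb⟩ := hsurj b'
  have hA : a' = F z₀ := by
    rcases himg xa with h | h
    · exact absurd ((hxa.symm.trans h) ▸ ha') hv'
    · exact hxa ▸ h
  have hB : b' = F z₀ := by
    rcases himg xb with h | h
    · exact absurd ((hxb.symm.trans h) ▸ hb') hv'
    · exact hxb ▸ h
  exact hab' (hA.trans hB.symm)

end CycAux


open CycAux in
/-- For a surjective monotone map `F` between cycle completions with `F(S) ⊆ S'`:
every cutpoint of the codomain has a unique preimage, which is a cutpoint,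
and every element of `S'` is the image of an element of `S`. -/
theorem stmt9 {R R' : Type*} (T : Set (R × R × R)) (T' : Set (R' × R' × R'))
    (S : Set R) (S' : Set R')
    (hcc : IsCycleCompletion T S) (hcc' : IsCycleCompletion T' S')
    (hS : ∃ a ∈ S, ∃ b ∈ S, a ≠ b) (hS' : ∃ a ∈ S', ∃ b ∈ S', a ≠ b)
    (F : R → R') (hsurj : Function.Surjective F) (hmono : CycMonotone T T' F)
    (hFS : F '' S ⊆ S') :
    (∀ v' ∉ S', (∃! v : R, F v = v') ∧ ∀ v : R, F v = v' → v ∉ S) ∧ F '' S = S' := by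
  have hT := hcc.1
  have hT' := hcc'.1
  constructor
  · intro v' hv'
    constructor
    · obtain ⟨v, hv⟩ := hsurj v'
      refine ⟨v, hv, ?_⟩
      intro u hu
      by_contra hne
      rcases dichotomy hT hT' hS' hsurj hmono hv' hu hv hne with h | h
      · exact Ucore hcc hS hFS hv' hu hv hne h
      · exact Ucore hcc hS hFS hv' hv hu (Ne.symm hne) h
    · intro u hu huS
      exact hv' (hu ▸ hFS ⟨u, huS, rfl⟩)
  · refine Set.Subset.antisymm hFS ?_
    intro s' hs'
    have hsne : ({s'} : Set R') ≠ S' := by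
      obtain ⟨a', ha', b', hb', hab'⟩ := hS'
      intro hEq
      have h1 : a' = s' := by have := hEq.symm ▸ ha'; exact this
      have h2 : b' = s' := by have := hEq.symm ▸ hb'; exact this
      exact hab' (h1.trans h2.symm)
    obtain ⟨⟨p', q'⟩, ⟨hp', hq', htr⟩, -⟩ :=
      hcc'.2 {s'} (Set.singleton_subset_iff.mpr hs') (singleton_interval hT' S' s')
        ⟨s', rfl⟩ hsne
    have hpq' : p' ≠ q' := by
      rintro rfl
      have : s' ∈ cycInterval T' p' p' ∩ S' := htr.symm ▸ rfl
      rcases mem_cycI.mp this.1 with rfl | rfl | h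
      · exact hp' hs'
      · exact hp' hs'
      · exact not_aba hT' h
    obtain ⟨p, hp⟩ := hsurj p'
    obtain ⟨q, hq⟩ := hsurj q'
    have hpS : p ∉ S := fun h => hp' (hp ▸ hFS ⟨p, h, rfl⟩)
    have hqS : q ∉ S := fun h => hq' (hq ▸ hFS ⟨q, h, rfl⟩)
    have hpq : p ≠ q := by rintro rfl; exact hpq' (hp.symm.trans hq)
    obtain ⟨a, ha, b, hb, hab⟩ := hS
    obtain ⟨s, hsS, hsI⟩ := L1 hT hcc.2 ha hb hab hpS hqS hpq
    have hFsS' : F s ∈ S' := hFS ⟨s, hsS, rfl⟩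
    have hpsq : (p, s, q) ∈ T := by
      rcases mem_cycI.mp hsI with rfl | rfl | h
      · exact absurd hsS hpS
      · exact absurd hsS hqS
      · exact h
    have hkey : (p', F s, q') ∈ T' := by
      have h1 : p' ≠ F s := fun e => hp' (e ▸ hFsS')
      have h2 : F s ≠ q' := fun e => hq' (e ▸ hFsS')
      rcases total' hT' h1 h2 hpq' with h | h
      · exact h
      · exact absurd (hmono q s p (by rw [hp, hq]; exact h)) (asym hT hpsq)
    have : F s ∈ cycInterval T' p' q' ∩ S' := ⟨mem_cycI.mpr (Or.inr (Or.inr hkey)), hFsS'⟩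
    have hFs : F s ∈ ({s'} : Set R') := htr ▸ this
    exact ⟨s, hsS, hFs⟩
end

section
/- Let (P_z)_{z ∈ C(I)} be a k-pseudoflower on index set I, and let a, b, c, d ∈ C(I) \ I be cutpoints such that a, b, c are pairwise distinct, b ∈ [a, c], and either d = a or d ∉ {a,b,c} with d ∈ [c, a]. Then V(a,b) ∩ V(c,d) = (P_a ∩ P_d) ∪ (P_b ∩ P_c) ∪ X, and V(a,c) ∩ V(b,d) = V(b,c) ∪ (P_a ∩ P_d). In particular, if P_a ∩ P_d = ∅ then S(b,c) = S(a,c) ∧ S(b,d). -/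
/-- A universe of vertex separations on ground set `V`. -/
def IsUniverse {V : Type*} (U : Set (Set V × Set V)) : Prop :=
  (∀ p ∈ U, p.1 ∪ p.2 = Set.univ) ∧
  (∀ p ∈ U, ∀ q ∈ U, (p.1 ∩ q.1, p.2 ∪ q.2) ∈ U) ∧
  (∀ p ∈ U, ∀ q ∈ U, (p.1 ∪ q.1, p.2 ∩ q.2) ∈ U) ∧
  (∀ p ∈ U, (p.2, p.1) ∈ U)

/-- `s` is the successor of `a` in the cyclic order `T`. -/
def IsCycSucc {C0 : Type*} (T : Set (C0 × C0 × C0)) (a s : C0) : Prop :=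
  s ≠ a ∧ ∀ b, b ≠ a → b ≠ s → b ∉ cycInterval T a s

/-- `p` is the predecessor of `a` in the cyclic order `T`. -/
def IsCycPred {C0 : Type*} (T : Set (C0 × C0 × C0)) (p a : C0) : Prop :=
  p ≠ a ∧ ∀ b, b ≠ a → b ≠ p → b ∉ cycInterval T p a

/-- The set `X` of vertices lying in no petal or gluing set. -/
def flowerX {V C0 : Type*} (P : C0 → Set V) : Set V := {x | ∀ z, x ∉ P z}

/-- The interval set `V(v,w) = X ∪ ⋃_{z ∈ [v,w]} P_z`. -/
def intervalSet {V C0 : Type*} (T : Set (C0 × C0 × C0)) (P : C0 → Set V)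
    (v w : C0) : Set V :=
  flowerX P ∪ ⋃ z ∈ cycInterval T v w, P z

/-- `(P_z)_{z ∈ C(I)}` is a `k`-pseudoflower (in the universe `U` of vertex
separations): here the ambient type `C0` plays the role of the cycle completion
`C(I)` of the index set `I0`, whose elements not in `I0` are the cutpoints. -/
def IsPseudoflower {V C0 : Type*} (U : Set (Set V × Set V)) (k : ℕ)
    (T : Set (C0 × C0 × C0)) (I0 : Set C0) (P : C0 → Set V) : Prop :=
  (∀ v ∉ I0, (P v).ncard = (k - (flowerX P).ncard) / 2) ∧
  (∀ v ∉ I0, ∀ w ∉ I0, v ≠ w →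
    (intervalSet T P v w, intervalSet T P w v) ∈ U ∧
    (intervalSet T P v w ∩ intervalSet T P w v).Finite ∧
    (intervalSet T P v w ∩ intervalSet T P w v).ncard ≤ k ∧
    intervalSet T P v w ∩ intervalSet T P w v = P v ∪ P w ∪ flowerX P) ∧
  (∀ i ∈ I0, ∀ p, IsCycPred T p i → P p ⊆ P i) ∧
  (∀ i ∈ I0, ∀ s, IsCycSucc T i s → P s ⊆ P i) ∧
  (∀ i ∈ I0, ∀ i' ∈ I0,
    (P i).ncard = (k - (flowerX P).ncard) / 2 → P i = P i' → i = i')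

section CycLemmas

variable {S : Type*} {Z : Set (S × S × S)}

lemma cyc_rot (hZ : IsCyclicOrder Z) {a b c : S} (h : (a,b,c) ∈ Z) : (b,c,a) ∈ Z :=
  hZ.1 a b c h

lemma cyc_trans (hZ : IsCyclicOrder Z) {a b c d : S} (h1 : (a,b,c) ∈ Z)
    (h2 : (a,c,d) ∈ Z) : (a,b,d) ∈ Z :=
  hZ.2.2.2 a b c d h1 h2

lemma cyc_ne (hZ : IsCyclicOrder Z) {a b c : S} (h : (a,b,c) ∈ Z) :
    a ≠ b ∧ b ≠ c ∧ a ≠ c := by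
  refine ⟨?_, ?_, ?_⟩
  · rintro rfl
    exact hZ.2.1 _ _ _ h (hZ.1 _ _ _ (hZ.1 _ _ _ h))
  · rintro rfl
    exact hZ.2.1 _ _ _ h (hZ.1 _ _ _ h)
  · rintro rfl
    exact hZ.2.1 _ _ _ h h

lemma mem_cycInterval {s t z : S} :
    z ∈ cycInterval Z s t ↔ z = s ∨ z = t ∨ (s, z, t) ∈ Z := by
  simp [cycInterval, or_assoc]

lemma left_mem_cycInterval {s t : S} : s ∈ cycInterval Z s t :=
  mem_cycInterval.mpr (Or.inl rfl)

lemma right_mem_cycInterval {s t : S} : t ∈ cycInterval Z s t :=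
  mem_cycInterval.mpr (Or.inr (Or.inl rfl))

lemma interval_subset_left (hZ : IsCyclicOrder Z) {u y w : S}
    (hy : y ∈ cycInterval Z u w) : cycInterval Z u y ⊆ cycInterval Z u w := by
  intro z hz
  rw [mem_cycInterval] at hz hy ⊢
  rcases hz with rfl | rfl | hz
  · exact Or.inl rfl
  · exact hy
  · rcases hy with rfl | rfl | hy
    · exact absurd rfl (cyc_ne hZ hz).2.2
    · exact Or.inr (Or.inr hz)
    · exact Or.inr (Or.inr (cyc_trans hZ hz hy))

lemma interval_subset_right (hZ : IsCyclicOrder Z) {u y w : S}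
    (hy : y ∈ cycInterval Z u w) : cycInterval Z y w ⊆ cycInterval Z u w := by
  intro z hz
  rw [mem_cycInterval] at hz hy ⊢
  rcases hz with rfl | rfl | hz
  · exact hy
  · exact Or.inr (Or.inl rfl)
  · rcases hy with rfl | rfl | hy
    · exact Or.inr (Or.inr hz)
    · exact absurd rfl (cyc_ne hZ hz).2.2
    · exact Or.inr (Or.inr (cyc_rot hZ (cyc_trans hZ
        (cyc_rot hZ (cyc_rot hZ hy)) (cyc_rot hZ (cyc_rot hZ hz)))))

lemma interval_split (hZ : IsCyclicOrder Z) {u y w : S}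
    (hy : y ∈ cycInterval Z u w) :
    cycInterval Z u w ⊆ cycInterval Z u y ∪ cycInterval Z y w := by
  intro z hz
  rw [mem_cycInterval] at hz hy
  rcases hz with rfl | rfl | hz
  · exact Or.inl left_mem_cycInterval
  · exact Or.inr right_mem_cycInterval
  · rcases hy with rfl | rfl | hy
    · exact Or.inr (mem_cycInterval.mpr (Or.inr (Or.inr hz)))
    · exact Or.inl (mem_cycInterval.mpr (Or.inr (Or.inr hz)))
    · by_cases hzy : z = y
      · exact Or.inl (mem_cycInterval.mpr (Or.inr (Or.inl hzy)))
      · by_cases h1 : (u, z, y) ∈ Z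
        · exact Or.inl (mem_cycInterval.mpr (Or.inr (Or.inr h1)))
        · have hyzu : (y, z, u) ∈ Z :=
            hZ.2.2.1 u z y (cyc_ne hZ hz).1 hzy (cyc_ne hZ hy).1 h1
          by_cases h2 : (y, z, w) ∈ Z
          · exact Or.inr (mem_cycInterval.mpr (Or.inr (Or.inr h2)))
          · have hwzy : (w, z, y) ∈ Z :=
              hZ.2.2.1 y z w (Ne.symm hzy) (cyc_ne hZ hz).2.1 (cyc_ne hZ hy).2.1 h2
            have : (z, u, w) ∈ Z :=
              cyc_trans hZ (cyc_rot hZ hyzu) (cyc_rot hZ hwzy)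
            exact absurd (cyc_rot hZ (cyc_rot hZ this)) (hZ.2.1 u z w hz)

end CycLemmas

section FlowerLemmas

variable {V C0 : Type*} {T : Set (C0 × C0 × C0)} {P : C0 → Set V}

lemma mem_flowerX {x : V} : x ∈ flowerX P ↔ ∀ z, x ∉ P z := Iff.rfl

lemma flowerX_subset_intervalSet {v w : C0} : flowerX P ⊆ intervalSet T P v w :=
  Set.subset_union_left

lemma petal_subset_intervalSet {v w z : C0} (hz : z ∈ cycInterval T v w) :
    P z ⊆ intervalSet T P v w :=
  (Set.subset_biUnion_of_mem hz).trans Set.subset_union_right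

lemma mem_intervalSet {v w : C0} {x : V} :
    x ∈ intervalSet T P v w ↔ x ∈ flowerX P ∨ ∃ z ∈ cycInterval T v w, x ∈ P z := by
  simp [intervalSet]

lemma intervalSet_mono {v w v' w' : C0}
    (h : cycInterval T v w ⊆ cycInterval T v' w') :
    intervalSet T P v w ⊆ intervalSet T P v' w' :=
  Set.union_subset_union_right _ (Set.biUnion_subset_biUnion_left h)

end FlowerLemmas

/-- Intersections of interval sets of a `k`-pseudoflower: if `a, b, c` are pairwise
distinct cutpoints with `b ∈ [a,c]` and `d = a` or `d ∉ {a,b,c}` with `d ∈ [c,a]`, then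
`V(a,b) ∩ V(c,d) = (P_a ∩ P_d) ∪ (P_b ∩ P_c) ∪ X` and
`V(a,c) ∩ V(b,d) = V(b,c) ∪ (P_a ∩ P_d)`; in particular if `P_a ∩ P_d = ∅` then
`S(b,c) = S(a,c) ∧ S(b,d)`. -/
theorem stmt19 {V C0 : Type*} (U : Set (Set V × Set V)) (hU : IsUniverse U) (k : ℕ)
    (T : Set (C0 × C0 × C0)) (I0 : Set C0)
    (hT : IsCycleCompletion T I0) (h2 : ∃ a ∈ I0, ∃ b ∈ I0, a ≠ b)
    (P : C0 → Set V) (hP : IsPseudoflower U k T I0 P)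
    (a b c d : C0) (ha : a ∉ I0) (hb : b ∉ I0) (hc : c ∉ I0) (hd : d ∉ I0)
    (hab : a ≠ b) (hbc : b ≠ c) (hac : a ≠ c)
    (hbin : b ∈ cycInterval T a c)
    (hdloc : d = a ∨ (d ≠ a ∧ d ≠ b ∧ d ≠ c ∧ d ∈ cycInterval T c a)) :
    intervalSet T P a b ∩ intervalSet T P c d =
      (P a ∩ P d) ∪ (P b ∩ P c) ∪ flowerX P ∧
    intervalSet T P a c ∩ intervalSet T P b d =
      intervalSet T P b c ∪ (P a ∩ P d) ∧
    (P a ∩ P d = ∅ →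
      intervalSet T P b c = intervalSet T P a c ∩ intervalSet T P b d ∧
      intervalSet T P c b = intervalSet T P c a ∪ intervalSet T P d b) := by
  obtain ⟨hZ, -⟩ := hT
  obtain ⟨-, hSepAll, -, -, -⟩ := hP
  have hSep : ∀ v, v ∉ I0 → ∀ w, w ∉ I0 → v ≠ w →
      intervalSet T P v w ∩ intervalSet T P w v = P v ∪ P w ∪ flowerX P :=
    fun v hv w hw hvw => (hSepAll v hv w hw hvw).2.2.2
  -- basic triples
  have habc : (a, b, c) ∈ T := by
    rcases mem_cycInterval.mp hbin with rfl | rfl | h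
    · exact absurd rfl hab.symm
    · exact absurd rfl hbc
    · exact h
  have hcda' : d = a ∨ (c, d, a) ∈ T := by
    rcases hdloc with rfl | ⟨hda, hdb, hdc, hdm⟩
    · exact Or.inl rfl
    · rcases mem_cycInterval.mp hdm with rfl | rfl | h
      · exact absurd rfl hdc
      · exact absurd rfl hda
      · exact Or.inr h
  have hdb' : d ≠ b := by
    rcases hdloc with rfl | ⟨-, hdb, -, -⟩
    · exact hab
    · exact hdb
  have hcab : (c, a, b) ∈ T := cyc_rot hZ (cyc_rot hZ habc)
  have hbca : (b, c, a) ∈ T := cyc_rot hZ habc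
  -- interval membership facts
  have hd_ca : d ∈ cycInterval T c a := by
    rcases hcda' with rfl | h
    · exact right_mem_cycInterval
    · exact mem_cycInterval.mpr (Or.inr (Or.inr h))
  have hFa_db : a ∈ cycInterval T d b := by
    rcases hcda' with rfl | h
    · exact left_mem_cycInterval
    · have hacd : (a, c, d) ∈ T := cyc_rot hZ (cyc_rot hZ h)
      have habd : (a, b, d) ∈ T := cyc_trans hZ habc hacd
      exact mem_cycInterval.mpr (Or.inr (Or.inr (cyc_rot hZ (cyc_rot hZ habd))))
  have hFc_bd : c ∈ cycInterval T b d := by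
    rcases hcda' with rfl | h
    · exact mem_cycInterval.mpr (Or.inr (Or.inr hbca))
    · have hcdb : (c, d, b) ∈ T := cyc_trans hZ h hcab
      exact mem_cycInterval.mpr (Or.inr (Or.inr (cyc_rot hZ (cyc_rot hZ hcdb))))
  have hFa_dc : a ∈ cycInterval T d c := by
    rcases hcda' with rfl | h
    · exact left_mem_cycInterval
    · exact mem_cycInterval.mpr (Or.inr (Or.inr (cyc_rot hZ h)))
  have hFa_cb : a ∈ cycInterval T c b := mem_cycInterval.mpr (Or.inr (Or.inr hcab))
  have hFd_cb : d ∈ cycInterval T c b := by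
    rcases hcda' with rfl | h
    · exact hFa_cb
    · exact mem_cycInterval.mpr (Or.inr (Or.inr (cyc_trans hZ h hcab)))
  have hFc_ba : c ∈ cycInterval T b a := mem_cycInterval.mpr (Or.inr (Or.inr hbca))
  -- interval inclusions
  have hI1 : cycInterval T a b ⊆ cycInterval T a c := interval_subset_left hZ hbin
  have hI2 : cycInterval T c d ⊆ cycInterval T c a := interval_subset_left hZ hd_ca
  have hI9 : cycInterval T b c ⊆ cycInterval T a c := interval_subset_right hZ hbin
  have hI10 : cycInterval T b c ⊆ cycInterval T b d := interval_subset_left hZ hFc_bd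
  have hI11 : cycInterval T c a ⊆ cycInterval T c b := interval_subset_left hZ hFa_cb
  have hI12 : cycInterval T d b ⊆ cycInterval T c b := interval_subset_right hZ hFd_cb
  have hI14 : cycInterval T a b ⊆ cycInterval T d b := interval_subset_right hZ hFa_db
  have hS7 : cycInterval T a c ⊆ cycInterval T a b ∪ cycInterval T b c :=
    interval_split hZ hbin
  have hS8 : cycInterval T b d ⊆ cycInterval T b c ∪ cycInterval T c d :=
    interval_split hZ hFc_bd
  have hS13 : cycInterval T c b ⊆ cycInterval T c a ∪ cycInterval T a b :=
    interval_split hZ hFa_cb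
  -- claim 1
  have claim1 : intervalSet T P a b ∩ intervalSet T P c d =
      (P a ∩ P d) ∪ (P b ∩ P c) ∪ flowerX P := by
    apply Set.Subset.antisymm
    · rintro x ⟨hx1, hx2⟩
      have hxa : x ∈ P a → x ∈ (P a ∩ P d) ∪ (P b ∩ P c) ∪ flowerX P := by
        intro hpa
        rcases hcda' with rfl | h
        · exact Or.inl (Or.inl ⟨hpa, hpa⟩)
        · have hcd : c ≠ d := (cyc_ne hZ h).1
          have hm : x ∈ P c ∪ P d ∪ flowerX P := by
            rw [← hSep c hc d hd hcd]
            exact ⟨hx2, petal_subset_intervalSet hFa_dc hpa⟩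
          rcases hm with (hpc | hpd) | hX
          · have hm2 : x ∈ P b ∪ P d ∪ flowerX P := by
              rw [← hSep b hb d hd hdb'.symm]
              exact ⟨petal_subset_intervalSet hFc_bd hpc,
                petal_subset_intervalSet hFa_db hpa⟩
            rcases hm2 with (hpb | hpd) | hX
            · exact Or.inl (Or.inr ⟨hpb, hpc⟩)
            · exact Or.inl (Or.inl ⟨hpa, hpd⟩)
            · exact absurd hpa (hX a)
          · exact Or.inl (Or.inl ⟨hpa, hpd⟩)
          · exact absurd hpa (hX a)
      have hm : x ∈ P a ∪ P c ∪ flowerX P := by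
        rw [← hSep a ha c hc hac]
        exact ⟨intervalSet_mono hI1 hx1, intervalSet_mono hI2 hx2⟩
      rcases hm with (hpa | hpc) | hX
      · exact hxa hpa
      · have hm2 : x ∈ P a ∪ P b ∪ flowerX P := by
          rw [← hSep a ha b hb hab]
          exact ⟨hx1, petal_subset_intervalSet hFc_ba hpc⟩
        rcases hm2 with (hpa | hpb) | hX
        · exact hxa hpa
        · exact Or.inl (Or.inr ⟨hpb, hpc⟩)
        · exact absurd hpc (hX c)
      · exact Or.inr hX
    · refine Set.union_subset (Set.union_subset ?_ ?_) ?_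
      · rintro x ⟨h1, h2⟩
        exact ⟨petal_subset_intervalSet left_mem_cycInterval h1,
          petal_subset_intervalSet right_mem_cycInterval h2⟩
      · rintro x ⟨h1, h2⟩
        exact ⟨petal_subset_intervalSet right_mem_cycInterval h1,
          petal_subset_intervalSet left_mem_cycInterval h2⟩
      · exact fun x hx => ⟨flowerX_subset_intervalSet hx, flowerX_subset_intervalSet hx⟩
  -- claim 2
  have claim2 : intervalSet T P a c ∩ intervalSet T P b d =
      intervalSet T P b c ∪ (P a ∩ P d) := by
    apply Set.Subset.antisymm
    · rintro x ⟨h1, h2⟩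
      rcases mem_intervalSet.mp h1 with hX | ⟨z, hz, hxz⟩
      · exact Or.inl (flowerX_subset_intervalSet hX)
      · rcases hS7 hz with hz1 | hz2
        · rcases mem_intervalSet.mp h2 with hX | ⟨z', hz', hxz'⟩
          · exact absurd hxz (hX z)
          · rcases hS8 hz' with hz'1 | hz'2
            · exact Or.inl (petal_subset_intervalSet hz'1 hxz')
            · have hm : x ∈ (P a ∩ P d) ∪ (P b ∩ P c) ∪ flowerX P := by
                rw [← claim1]
                exact ⟨petal_subset_intervalSet hz1 hxz,
                  petal_subset_intervalSet hz'2 hxz'⟩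
              rcases hm with (had | hbc') | hX
              · exact Or.inr had
              · exact Or.inl (petal_subset_intervalSet left_mem_cycInterval hbc'.1)
              · exact Or.inl (flowerX_subset_intervalSet hX)
        · exact Or.inl (petal_subset_intervalSet hz2 hxz)
    · refine Set.union_subset ?_ ?_
      · exact fun x hx => ⟨intervalSet_mono hI9 hx, intervalSet_mono hI10 hx⟩
      · rintro x ⟨h1, h2⟩
        exact ⟨petal_subset_intervalSet left_mem_cycInterval h1,
          petal_subset_intervalSet right_mem_cycInterval h2⟩
  -- claim 4
  have claim4 : intervalSet T P c b = intervalSet T P c a ∪ intervalSet T P d b := by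
    apply Set.Subset.antisymm
    · intro x hx
      rcases mem_intervalSet.mp hx with hX | ⟨z, hz, hxz⟩
      · exact Or.inl (flowerX_subset_intervalSet hX)
      · rcases hS13 hz with h | h
        · exact Or.inl (petal_subset_intervalSet h hxz)
        · exact Or.inr (petal_subset_intervalSet (hI14 h) hxz)
    · exact Set.union_subset (intervalSet_mono hI11) (intervalSet_mono hI12)
  refine ⟨claim1, claim2, fun hE => ⟨?_, claim4⟩⟩
  rw [claim2, hE, Set.union_empty]
end
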